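/- Let d ≥ 1 and a_1, …, a_d, x be real numbers. Let K = Σ_{j=1}^{d} A_j where A_1 = I_2^{⊗(d-1)} ⊗ T_2(-a_1,x,a_1) and, for 2 ≤ j ≤ d, A_j = I_2^{⊗(d-j)} ⊗ T_2(-a_j,0,a_j) ⊗ J_2^{⊗(j-1)} (here T_2(-a,x,a) is the 2×2 matrix [[x,a],[-a,x]] and J_2 = [[0,1],[1,0]]). Then det K = ( x^2 + a_1^2 + a_2^2 + ⋯ + a_d^2 )^{2^{d-1}}. (This is the partition function of the monopole-dimer model on the d-dimensional hypercube Q_d with vertex weights x and edge weights a_j in the j-th direction.) -/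

import Mathlib

/-- The `k × k` tridiagonal Toeplitz matrix `T_k(-s, z, s)` with diagonal entries `z`,
superdiagonal entries `s` and subdiagonal entries `-s`. -/
noncomputable def tridiag (k : ℕ) (s z : ℂ) : Matrix (Fin k) (Fin k) ℂ :=
  Matrix.of fun i j =>
    if (i : ℕ) = (j : ℕ) then z
    else if (i : ℕ) + 1 = (j : ℕ) then s
    else if (j : ℕ) + 1 = (i : ℕ) then -s
    else 0

/-- The `k × k` anti-diagonal matrix `J_k` with all anti-diagonal entries 1. -/
noncomputable def antidiag (k : ℕ) : Matrix (Fin k) (Fin k) ℂ :=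
  Matrix.of fun i j => if (i : ℕ) + (j : ℕ) + 1 = k then 1 else 0

/-- The summand `A_j = I_{m_d} ⊗ ⋯ ⊗ I_{m_{j+1}} ⊗ T_{m_j}(-a_j, z_j, a_j) ⊗ J_{m_{j-1}}
⊗ ⋯ ⊗ J_{m_1}` (with `z_1 = x` and `z_j = 0` for `j ≥ 2`), written entrywise on the index
set `∀ i, Fin (m i)` of the grid: the Kronecker product is given by the product of the
entries of its tensor factors. Here `j : Fin d` is the `0`-based index of the factor
carrying the tridiagonal matrix. -/
noncomputable def gridSummand (d : ℕ) (m : Fin d → ℕ) (a : Fin d → ℝ) (x : ℝ) (j : Fin d) :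
    Matrix (∀ i, Fin (m i)) (∀ i, Fin (m i)) ℂ :=
  Matrix.of fun v w => ∏ i : Fin d,
    if j < i then (if v i = w i then 1 else 0)
    else if i = j then tridiag (m i) (a i) (if (i : ℕ) = 0 then (x : ℂ) else 0) (v i) (w i)
    else antidiag (m i) (v i) (w i)

/-- The generalised adjacency matrix `K = Σ_{j=1}^d A_j` of the monopole-dimer model on the
grid graph `P_{m_1} □ ⋯ □ P_{m_d}` with vertex weights `x` and edge weights `a_j`. -/
noncomputable def gridK (d : ℕ) (m : Fin d → ℕ) (a : Fin d → ℝ) (x : ℝ) :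
    Matrix (∀ i, Fin (m i)) (∀ i, Fin (m i)) ℂ :=
  ∑ j : Fin d, gridSummand d m a x j

/-!
Write `K = x • 1 + S` with `S = gridK d 2 a 0`. Each summand of `S` is a Kronecker product of the
`2 × 2` matrices `1`, `J` and `T = T₂(-a, 0, a)`, which satisfy `T² = -a² • 1`, `J² = 1`,
`T J = -J T`, `Tᵀ = -T`, `Jᵀ = J`. Hence the summands are antisymmetric and pairwise
anticommuting (a Jordan–Wigner representation of a Clifford algebra), so `Sᵀ = -S` and
`S² = -r • 1` with `r = Σ a_j²`. Then `(z • 1 + S) (z • 1 + S)ᵀ = (z² + r) • 1`, so the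
characteristic polynomial of `-S`, whose value at `z` is `det (z • 1 + S)`, squares to
`(X² + r) ^ 2^d`; being monic, it is `(X² + r) ^ 2^(d-1)`.
-/

open Matrix Polynomial

theorem Finset.sum_mul_sum_self_of_anticommute {ι A : Type*} [Ring A] (s : Finset ι) (f : ι → A)
    (h : ∀ i ∈ s, ∀ j ∈ s, i ≠ j → f i * f j = -(f j * f i)) :
    (∑ i ∈ s, f i) * (∑ i ∈ s, f i) = ∑ i ∈ s, f i * f i := by
  classical
  induction s using Finset.induction_on with
  | empty => simp
  | insert a s ha ih =>
    have hcross : f a * ∑ j ∈ s, f j + (∑ j ∈ s, f j) * f a = 0 := by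
      rw [Finset.mul_sum, Finset.sum_mul, ← Finset.sum_add_distrib]
      refine Finset.sum_eq_zero fun j hj => ?_
      rw [h a (by simp) j (by simp [hj]) (by rintro rfl; exact ha hj), neg_add_cancel]
    have hs := ih fun i hi j hj => h i (by simp [hi]) j (by simp [hj])
    rw [Finset.sum_insert ha, Finset.sum_insert ha, ← hs, ← add_zero (f a * f a), ← hcross]
    noncomm_ring

theorem Polynomial.Monic.eq_of_sq_eq_sq {R : Type*} [CommRing R] [IsDomain R] {p q : R[X]}
    (hp : p.Monic) (hq : q.Monic) (h : p ^ 2 = q ^ 2) : p = q := by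
  obtain h | h := sq_eq_sq_iff_eq_or_eq_neg.1 h
  · exact h
  · have h1 : (1 : R) = -1 := by
      have := congrArg Polynomial.leadingCoeff h
      rwa [leadingCoeff_neg, hp.leadingCoeff, hq.leadingCoeff] at this
    have h2 : (1 : R[X]) = -1 := by simpa using congrArg C h1
    rw [h, ← neg_one_mul, ← h2, one_mul]

namespace Matrix

variable {R n : Type*} [CommRing R] [Fintype n] [DecidableEq n]

theorem det_smul_one_add_sq {A : Matrix n n R} {c : R} (hA : Aᵀ = -A)
    (hA2 : A * A = -c • 1) (z : R) :
    det (z • 1 + A) ^ 2 = (z ^ 2 + c) ^ Fintype.card n := by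
  have hmul : (z • 1 + A) * (z • 1 + A)ᵀ = (z ^ 2 + c) • 1 := by
    rw [transpose_add, hA, transpose_smul, transpose_one, ← sub_eq_add_neg]
    simp only [add_mul, mul_sub, smul_mul_assoc, mul_smul_comm, one_mul, mul_one]
    rw [hA2]
    module
  calc det (z • 1 + A) ^ 2 = det ((z • 1 + A) * (z • 1 + A)ᵀ) := by
        rw [det_mul, det_transpose, sq]
    _ = _ := by rw [hmul, det_smul, det_one, mul_one]

theorem det_smul_one_add_eq_pow [IsDomain R] {A : Matrix n n R} {c : R} (hA : Aᵀ = -A)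
    (hA2 : A * A = -c • 1) {k : ℕ} (hcard : Fintype.card n = 2 * k) (z : R) :
    det (z • 1 + A) = (z ^ 2 + c) ^ k := by
  have hchar : charmatrix (-A) = (X : R[X]) • 1 + A.map C := by
    ext i j
    by_cases hij : i = j
    · subst hij; simp
    · simp [hij]
  have hsq : (-A).charpoly ^ 2 = ((X ^ 2 + C c) ^ k) ^ 2 := by
    rw [charpoly, hchar, det_smul_one_add_sq (c := C c), hcard, ← pow_mul, mul_comm]
    · rw [← transpose_map, hA]; exact Matrix.map_neg _ (map_neg C) A
    · ext i j
      by_cases hij : i = j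
      · subst hij; simp [← Matrix.map_mul, hA2]
      · simp [← Matrix.map_mul, hA2, hij]
  have hpq := (charpoly_monic _).eq_of_sq_eq_sq ((monic_X_pow_add_C c two_ne_zero).pow k) hsq
  simpa [eval_charpoly, smul_one_eq_diagonal, sub_eq_add_neg] using congrArg (eval z) hpq

end Matrix

namespace Matrix

variable {ι R : Type*} [Fintype ι] [CommSemiring R] {m n p : ι → Type*}

def piKronecker (f : ∀ i, Matrix (m i) (n i) R) : Matrix (∀ i, m i) (∀ i, n i) R :=
  of fun v w => ∏ i, f i (v i) (w i)

@[simp]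
theorem piKronecker_apply (f : ∀ i, Matrix (m i) (n i) R) (v : ∀ i, m i) (w : ∀ i, n i) :
    piKronecker f v w = ∏ i, f i (v i) (w i) := rfl

theorem piKronecker_mul [DecidableEq ι] [∀ i, Fintype (n i)] (f : ∀ i, Matrix (m i) (n i) R)
    (g : ∀ i, Matrix (n i) (p i) R) :
    piKronecker f * piKronecker g = piKronecker fun i => f i * g i := by
  ext v w
  simp only [mul_apply, piKronecker_apply, Fintype.prod_sum, Finset.prod_mul_distrib]

theorem piKronecker_one [∀ i, DecidableEq (m i)] :
    piKronecker (fun i => (1 : Matrix (m i) (m i) R)) = 1 := by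
  ext v w
  simp [one_apply, Finset.prod_boole, funext_iff]

theorem piKronecker_transpose (f : ∀ i, Matrix (m i) (n i) R) :
    (piKronecker f)ᵀ = piKronecker fun i => (f i)ᵀ := rfl

variable [DecidableEq ι] {f g h : ∀ i, Matrix (m i) (n i) R} (j : ι)

theorem piKronecker_apply_eq_mul_prod_compl (hi : ∀ i ≠ j, f i = g i) (v : ∀ i, m i)
    (w : ∀ i, n i) :
    piKronecker f v w = f j (v j) (w j) * ∏ i ∈ {j}ᶜ, g i (v i) (w i) := by
  rw [piKronecker_apply, Fintype.prod_eq_mul_prod_compl j]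
  exact congrArg _ (Finset.prod_congr rfl fun i hi' => by rw [hi i (by simpa using hi')])

theorem piKronecker_eq_smul (c : R) (hj : f j = c • g j) (hi : ∀ i ≠ j, f i = g i) :
    piKronecker f = c • piKronecker g := by
  ext v w
  rw [piKronecker_apply_eq_mul_prod_compl j hi, smul_apply,
    piKronecker_apply_eq_mul_prod_compl j fun _ _ => rfl, hj, smul_apply, smul_eq_mul,
    smul_eq_mul, mul_assoc]

theorem piKronecker_eq_add (hj : f j = g j + h j) (hg : ∀ i ≠ j, g i = f i)
    (hh : ∀ i ≠ j, h i = f i) :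
    piKronecker f = piKronecker g + piKronecker h := by
  ext v w
  rw [add_apply, piKronecker_apply_eq_mul_prod_compl j fun _ _ => rfl,
    piKronecker_apply_eq_mul_prod_compl j hg, piKronecker_apply_eq_mul_prod_compl j hh, hj,
    add_apply, add_mul]

end Matrix

theorem tridiag_eq_smul_one_add (k : ℕ) (s z : ℂ) : tridiag k s z = z • 1 + tridiag k s 0 := by
  ext i j
  by_cases hij : i = j
  · subst hij; simp [tridiag]
  · simp [tridiag, hij, Fin.val_eq_val]

theorem transpose_tridiag (k : ℕ) (s : ℂ) : (tridiag k s 0)ᵀ = -tridiag k s 0 := by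
  ext i j
  by_cases h0 : (i : ℕ) = j
  · simp [tridiag, h0]
  by_cases h1 : (i : ℕ) + 1 = j
  · simp [tridiag, h0, h1, Ne.symm h0, show (j : ℕ) + 1 ≠ i by omega]
  by_cases h2 : (j : ℕ) + 1 = i <;> simp [tridiag, h0, h1, h2, Ne.symm h0]

theorem transpose_antidiag (k : ℕ) : (antidiag k)ᵀ = antidiag k := by
  ext i j
  simp only [antidiag, transpose_apply, of_apply, add_comm (i : ℕ)]

theorem antidiag_mul_self (k : ℕ) : antidiag k * antidiag k = 1 := by
  ext i j
  rw [mul_apply, Finset.sum_eq_single (Fin.rev i)]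
  · have := i.isLt
    have := j.isLt
    simp only [antidiag, of_apply, Fin.val_rev, one_apply, Fin.ext_iff]
    split_ifs <;> simp <;> omega
  · intro l _ hl
    simp only [antidiag, of_apply, mul_ite, mul_one, mul_zero, ite_eq_right_iff]
    intro _ h
    have := i.isLt
    exact absurd (Fin.ext (by simp only [Fin.val_rev]; omega)) hl
  · simp

theorem tridiag_two_mul_self (s : ℂ) : tridiag 2 s 0 * tridiag 2 s 0 = -(s ^ 2) • 1 := by
  ext i j
  fin_cases i <;> fin_cases j <;>
    simp [tridiag, mul_apply, Fin.sum_univ_two, one_apply] <;> ring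

theorem tridiag_two_mul_antidiag (s : ℂ) :
    tridiag 2 s 0 * antidiag 2 = -(antidiag 2 * tridiag 2 s 0) := by
  ext i j
  fin_cases i <;> fin_cases j <;> simp [tridiag, antidiag, mul_apply, Fin.sum_univ_two]

noncomputable def gridFactor (d : ℕ) (m : Fin d → ℕ) (a : Fin d → ℝ) (z : ℂ) (j i : Fin d) :
    Matrix (Fin (m i)) (Fin (m i)) ℂ :=
  if j < i then 1 else if i = j then tridiag (m i) (a i) z else antidiag (m i)

section Grid

variable {d : ℕ} (m : Fin d → ℕ) (a : Fin d → ℝ)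

theorem gridSummand_eq_piKronecker (x : ℝ) (j : Fin d) :
    gridSummand d m a x j =
      piKronecker (gridFactor d m a (if (j : ℕ) = 0 then (x : ℂ) else 0) j) := by
  ext v w
  simp only [gridSummand, of_apply, piKronecker_apply]
  refine Finset.prod_congr rfl fun i _ => ?_
  unfold gridFactor
  split_ifs <;> simp_all [one_apply]

theorem gridK_eq_smul_one_add (hd : 0 < d) (x : ℝ) :
    gridK d m a x = (x : ℂ) • 1 + gridK d m a 0 := by
  set j₀ : Fin d := ⟨0, hd⟩
  have hlt : ∀ i ≠ j₀, j₀ < i := fun i hi => by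
    rw [Fin.lt_def]; exact Nat.pos_of_ne_zero fun h => hi (Fin.ext h)
  have hj₀ : gridSummand d m a x j₀ = (x : ℂ) • 1 + gridSummand d m a 0 j₀ := by
    have hsmul : (x : ℂ) • (1 : Matrix (∀ i, Fin (m i)) (∀ i, Fin (m i)) ℂ) =
        piKronecker (Function.update (fun _ => 1) j₀ ((x : ℂ) • 1)) := by
      rw [piKronecker_eq_smul j₀ (x : ℂ) (g := fun _ => 1) (by simp) fun i hi => by simp [hi],
        piKronecker_one]
    rw [hsmul, gridSummand_eq_piKronecker, gridSummand_eq_piKronecker, if_pos rfl]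
    refine piKronecker_eq_add j₀ ?_ (fun i hi => ?_) (fun i hi => ?_)
    · simp [gridFactor, tridiag_eq_smul_one_add _ _ (x : ℂ)]
    · simp [gridFactor, hi, hlt i hi]
    · simp [gridFactor, hlt i hi]
  have hj : ∀ j ≠ j₀, gridSummand d m a x j = gridSummand d m a 0 j := by
    intro j hj
    have : (j : ℕ) ≠ 0 := fun h => hj (Fin.ext h)
    simp only [gridSummand_eq_piKronecker, this, if_false]
  rw [gridK, gridK, Fintype.sum_eq_add_sum_compl j₀, Fintype.sum_eq_add_sum_compl j₀, hj₀,
    add_assoc, Finset.sum_congr rfl fun j hj' => hj j (by simpa using hj')]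

theorem transpose_gridK_zero : (gridK d m a 0)ᵀ = -gridK d m a 0 := by
  rw [gridK, transpose_sum, ← Finset.sum_neg_distrib]
  refine Finset.sum_congr rfl fun j _ => ?_
  rw [gridSummand_eq_piKronecker, piKronecker_transpose, ← neg_one_smul ℂ]
  simp only [Complex.ofReal_zero, ite_self]
  refine piKronecker_eq_smul j (-1) ?_ fun i hi => ?_
  · simp [gridFactor, transpose_tridiag]
  · unfold gridFactor
    split_ifs <;> simp_all [transpose_antidiag]

end Grid

section Hypercube

variable {d : ℕ} (a : Fin d → ℝ)

theorem gridSummand_two_mul_self (j : Fin d) :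
    gridSummand d (fun _ => 2) a 0 j * gridSummand d (fun _ => 2) a 0 j =
      -((a j : ℂ) ^ 2) • 1 := by
  rw [gridSummand_eq_piKronecker, piKronecker_mul, ← piKronecker_one]
  simp only [Complex.ofReal_zero, ite_self]
  refine piKronecker_eq_smul j _ (by simp [gridFactor, tridiag_two_mul_self]) fun i hi => ?_
  unfold gridFactor
  split_ifs <;> simp [antidiag_mul_self]

theorem gridSummand_two_mul_eq_neg_mul_of_lt {j k : Fin d} (hjk : j < k) :
    gridSummand d (fun _ => 2) a 0 j * gridSummand d (fun _ => 2) a 0 k =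
      -(gridSummand d (fun _ => 2) a 0 k * gridSummand d (fun _ => 2) a 0 j) := by
  rw [gridSummand_eq_piKronecker, gridSummand_eq_piKronecker, piKronecker_mul, piKronecker_mul,
    ← neg_one_smul ℂ]
  simp only [Complex.ofReal_zero, ite_self]
  refine piKronecker_eq_smul j _ ?_ fun i hi => ?_
  · simp [gridFactor, hjk.ne, not_lt_of_gt hjk, tridiag_two_mul_antidiag]
  · unfold gridFactor
    split_ifs <;> first | (exfalso; order) | simp

theorem gridK_two_mul_self :
    gridK d (fun _ => 2) a 0 * gridK d (fun _ => 2) a 0 = -(∑ j, (a j : ℂ) ^ 2) • 1 := by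
  rw [gridK, Finset.sum_mul_sum_self_of_anticommute, neg_smul, Finset.sum_smul,
    ← Finset.sum_neg_distrib]
  · exact Finset.sum_congr rfl fun j _ => by rw [gridSummand_two_mul_self, neg_smul]
  · intro j _ k _ hjk
    rcases hjk.lt_or_gt with h | h
    · exact gridSummand_two_mul_eq_neg_mul_of_lt a h
    · rw [gridSummand_two_mul_eq_neg_mul_of_lt a h, neg_neg]

end Hypercube

/-- The partition function of the monopole-dimer model on the `d`-dimensional hypercube
`Q_d` with vertex weights `x` and edge weights `a_j` in the `j`-th direction:
`det K = (x² + a_1² + ⋯ + a_d²)^{2^{d-1}}`. -/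
theorem det_gridK_hypercube (d : ℕ) (hd : 1 ≤ d) (a : Fin d → ℝ) (x : ℝ) :
    (gridK d (fun _ => 2) a x).det =
      ((x ^ 2 + ∑ j : Fin d, a j ^ 2) ^ (2 ^ (d - 1)) : ℝ) := by
  have hcard : Fintype.card (∀ i : Fin d, Fin ((fun _ => 2) i)) = 2 * 2 ^ (d - 1) := by
    rw [Fintype.card_pi]
    simp [← pow_succ', Nat.sub_add_cancel hd]
  rw [gridK_eq_smul_one_add _ _ hd, det_smul_one_add_eq_pow (transpose_gridK_zero _ _)
    (gridK_two_mul_self a) hcard]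
  push_cast
  rfl
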